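/- Let V be a finite-dimensional complex vector space and D : V →ₗ[ℂ] V a linear endomorphism. Suppose ω : V →ₗ[ℂ] V is a linear map with ω ∘ ω = id, and α : V → V is an antilinear map with α ∘ α = -id, satisfying ω ∘ α = α ∘ ω, ω ∘ D = -D ∘ ω, and α ∘ D = -D ∘ α. Then the composition β := ω ∘ α is an antilinear map with β ∘ β = -id which commutes with D; consequently for every real number μ the μ-eigenspace of D has even complex dimension. -/
import Mathlib

open Module

lemma even_finrank_of_quat (V : Type*) [AddCommGroup V] [Module ℂ V]
    [FiniteDimensional ℂ V] (J : V →ₛₗ[starRingEnd ℂ] V)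
    (hJ : ∀ v : V, J (J v) = -v) : Even (Module.finrank ℂ V) := by
  generalize hn : Module.finrank ℂ V = n
  induction n using Nat.strong_induction_on generalizing V with
  | _ n ih =>
    rcases Nat.eq_zero_or_pos n with h0 | hpos
    · simp [h0]
    · have hpos' : 0 < Module.finrank ℂ V := hn ▸ hpos
      have : Nontrivial V := Module.nontrivial_of_finrank_pos hpos'
      obtain ⟨v, hv⟩ := exists_ne (0 : V)
      have hindep : LinearIndependent ℂ ![v, J v] := by
        rw [LinearIndependent.pair_iff]
        intro s t hst
        have h2 : (starRingEnd ℂ s) • J v + (starRingEnd ℂ t) • J (J v) = 0 := by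
          have := congrArg J hst
          simpa [map_add, map_smulₛₗ] using this
        rw [hJ] at h2
        have h3 : starRingEnd ℂ s • J v = starRingEnd ℂ t • v := by
          linear_combination (norm := module) h2
        have key : ((starRingEnd ℂ) s * s + t * starRingEnd ℂ t) • v = 0 := by
          linear_combination (norm := module) (starRingEnd ℂ s) • hst - t • h3
        have hc : (starRingEnd ℂ) s * s + t * starRingEnd ℂ t = 0 := by
          by_contra hc
          exact hv ((smul_eq_zero.mp key).resolve_left hc)
        rw [← Complex.normSq_eq_conj_mul_self, ← Complex.mul_conj] at hc
        have hre := congrArg Complex.re hc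
        simp [Complex.normSq_apply] at hre
        have h1 := Complex.normSq_nonneg s
        have h2' := Complex.normSq_nonneg t
        have hsum : Complex.normSq s + Complex.normSq t = 0 := by
          simp [Complex.normSq_apply]; linarith
        constructor
        · exact Complex.normSq_eq_zero.mp (by linarith)
        · exact Complex.normSq_eq_zero.mp (by linarith)
      set W : Submodule ℂ V := Submodule.span ℂ {v, J v} with hW
      have hvW : v ∈ W := Submodule.subset_span (Set.mem_insert _ _)
      have hJvW : J v ∈ W := Submodule.subset_span (Set.mem_insert_of_mem _ rfl)
      have hWJ : W ≤ W.comap J := by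
        rw [hW, Submodule.span_le]
        rintro x (rfl | rfl)
        · exact hJvW
        · exact Submodule.mem_comap.mpr (by rw [hJ]; exact neg_mem hvW)
      have hrange : Submodule.span ℂ (Set.range ![v, J v]) = W := by
        rw [hW]; congr 1; ext x
        simp [Matrix.range_cons, Matrix.range_empty]; tauto
      have hrankW : Module.finrank ℂ W = 2 := by
        rw [← hrange, finrank_span_eq_card hindep]; simp
      let J' : (V ⧸ W) →ₛₗ[starRingEnd ℂ] (V ⧸ W) := W.mapQ W J hWJ
      have hJ' : ∀ x : V ⧸ W, J' (J' x) = -x := by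
        intro x
        obtain ⟨y, rfl⟩ := Submodule.Quotient.mk_surjective W x
        simp [J', Submodule.mapQ_apply, hJ]
      have hQrank := Submodule.finrank_quotient_add_finrank W
      rw [hn, hrankW] at hQrank
      have hlt : Module.finrank ℂ (V ⧸ W) < n := by omega
      obtain ⟨k, hk⟩ := ih _ hlt (V ⧸ W) J' hJ' rfl
      exact ⟨k + 1, by omega⟩

/-- If `ω` is a linear involution and `α` a quaternionic structure on a
finite-dimensional complex vector space, with `ω` and `α` commuting with each other
and both anticommuting with a linear endomorphism `D`, then `β := ω ∘ α` is a
quaternionic structure commuting with `D`; consequently every real eigenspace of `D`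
has even complex dimension. -/
theorem even_finrank_eigenspace_of_anticommuting_pair
    (V : Type*) [AddCommGroup V] [Module ℂ V] [FiniteDimensional ℂ V]
    (D : V →ₗ[ℂ] V)
    (ω : V →ₗ[ℂ] V) (hω : ∀ v : V, ω (ω v) = v)
    (α : V →ₛₗ[starRingEnd ℂ] V) (hα : ∀ v : V, α (α v) = -v)
    (hωα : ∀ v : V, ω (α v) = α (ω v))
    (hωD : ∀ v : V, ω (D v) = -D (ω v))
    (hαD : ∀ v : V, α (D v) = -D (α v)) :
    (∀ v : V, ω (α (ω (α v))) = -v) ∧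
    (∀ v : V, ω (α (D v)) = D (ω (α v))) ∧
    ∀ μ : ℝ, Even (Module.finrank ℂ (Module.End.eigenspace D (μ : ℂ))) := by
  have hββ : ∀ v : V, ω (α (ω (α v))) = -v := by
    intro v
    rw [hωα v, hα, map_neg, hω]
  have hβD : ∀ v : V, ω (α (D v)) = D (ω (α v)) := by
    intro v
    rw [hαD, map_neg, hωD, neg_neg]
  refine ⟨hββ, hβD, fun μ => ?_⟩
  set E := Module.End.eigenspace D (μ : ℂ) with hE
  have hmem : ∀ x : E, ω (α (x : V)) ∈ E := by
    intro x
    have hx : D (x : V) = (μ : ℂ) • (x : V) := Module.End.mem_eigenspace_iff.mp x.2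
    refine Module.End.mem_eigenspace_iff.mpr ?_
    rw [← hβD, hx, map_smulₛₗ, map_smul]
    congr 1
    simp [Complex.conj_ofReal]
  let J : E →ₛₗ[starRingEnd ℂ] E :=
    { toFun := fun x => ⟨ω (α (x : V)), hmem x⟩
      map_add' := by intro x y; ext; simp
      map_smul' := by intro c x; ext; simp [map_smulₛₗ] }
  have hJ : ∀ x : E, J (J x) = -x := by
    intro x
    ext
    simp only [J, LinearMap.coe_mk, AddHom.coe_mk]
    rw [hββ]
    rfl
  exact even_finrank_of_quat E J hJ
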